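/- Let (Ω, F, P) be a probability space, let Φ : Ω → (0, 1/2] be measurable and integrable, and let S̃ : Ω → [0, ∞) be measurable and integrable. Then E[Φ · Q(√(S̃/(2Φ)))] ≥ E[Φ] · Q(√(E[S̃]/(2·E[Φ]))). -/

import Mathlib

/-!
`Q` is convex and nonincreasing on `[0, ∞)` with `Q' = -φ`, so it lies above its tangent at
`m = √(E[S̃] / (2 E[Φ]))`. Evaluating the tangent inequality at `√(S̃ / (2Φ))` and multiplying
by `Φ` leaves the term `Φ √(S̃ / (2Φ)) = √(Φ S̃ / 2)`, whose expectation is at most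
`√(E[Φ] E[S̃] / 2) = m E[Φ]` by Cauchy–Schwarz. As the slope `-φ(m)` is nonpositive, the
linear part of the integrated tangent is then nonnegative.
-/

open MeasureTheory

/-- The standard Gaussian tail function `Q(x) = (1/√(2π)) ∫_x^∞ exp(−z²/2) dz`. -/
noncomputable def gaussQ (x : ℝ) : ℝ :=
  (Real.sqrt (2 * Real.pi))⁻¹ * ∫ z in Set.Ioi x, Real.exp (-z ^ 2 / 2)

open ProbabilityTheory Real Set

lemma gaussQ_eq_setIntegral_gaussianPDFReal (x : ℝ) :
    gaussQ x = ∫ z in Ioi x, gaussianPDFReal 0 1 z := by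
  simp [gaussQ, gaussianPDFReal, integral_const_mul]

lemma gaussQ_nonneg (x : ℝ) : 0 ≤ gaussQ x := by
  rw [gaussQ_eq_setIntegral_gaussianPDFReal]
  exact setIntegral_nonneg measurableSet_Ioi fun z _ ↦ gaussianPDFReal_nonneg 0 1 z

lemma gaussQ_le_one (x : ℝ) : gaussQ x ≤ 1 := by
  rw [gaussQ_eq_setIntegral_gaussianPDFReal, ← integral_gaussianPDFReal_eq_one 0 one_ne_zero]
  exact setIntegral_le_integral (integrable_gaussianPDFReal 0 1)
    (.of_forall (gaussianPDFReal_nonneg 0 1))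

lemma gaussQ_antitone : Antitone gaussQ := fun x y hxy ↦ by
  simp only [gaussQ_eq_setIntegral_gaussianPDFReal]
  exact setIntegral_mono_set (integrable_gaussianPDFReal 0 1).integrableOn
    (.of_forall (gaussianPDFReal_nonneg 0 1)) (Ioi_subset_Ioi hxy).eventuallyLE

lemma gaussQ_sub_gaussQ {a b : ℝ} (hab : a ≤ b) :
    gaussQ a - gaussQ b = ∫ z in Ioc a b, gaussianPDFReal 0 1 z := by
  have hint := (integrable_gaussianPDFReal 0 1).integrableOn (s := Ioc a b)
  simp only [gaussQ_eq_setIntegral_gaussianPDFReal, ← Ioc_union_Ioi_eq_Ioi hab,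
    setIntegral_union (Ioc_disjoint_Ioi le_rfl) measurableSet_Ioi hint
      (integrable_gaussianPDFReal 0 1).integrableOn, add_sub_cancel_right]

lemma gaussianPDFReal_le_of_le {a b : ℝ} (ha : 0 ≤ a) (hab : a ≤ b) :
    gaussianPDFReal 0 1 b ≤ gaussianPDFReal 0 1 a := by
  simp only [gaussianPDFReal, sub_zero]
  gcongr

lemma gaussQ_sub_mul_le_gaussQ {m x : ℝ} (hm : 0 ≤ m) (hx : 0 ≤ x) :
    gaussQ m - gaussianPDFReal 0 1 m * (x - m) ≤ gaussQ x := by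
  have hint {a b : ℝ} : IntegrableOn (gaussianPDFReal 0 1) (Ioc a b) :=
    (integrable_gaussianPDFReal 0 1).integrableOn
  rcases le_total m x with hmx | hxm
  · have : ∫ z in Ioc m x, gaussianPDFReal 0 1 z ≤ ∫ _ in Ioc m x, gaussianPDFReal 0 1 m :=
      setIntegral_mono_on hint (integrableOn_const measure_Ioc_lt_top.ne) measurableSet_Ioc
        fun z hz ↦ gaussianPDFReal_le_of_le hm hz.1.le
    rw [setIntegral_const, Real.volume_real_Ioc_of_le hmx, smul_eq_mul, ← gaussQ_sub_gaussQ hmx]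
      at this
    linarith
  · have : ∫ _ in Ioc x m, gaussianPDFReal 0 1 m ≤ ∫ z in Ioc x m, gaussianPDFReal 0 1 z :=
      setIntegral_mono_on (integrableOn_const measure_Ioc_lt_top.ne) hint measurableSet_Ioc
        fun z hz ↦ gaussianPDFReal_le_of_le (hx.trans hz.1.le) hz.2
    rw [setIntegral_const, Real.volume_real_Ioc_of_le hxm, smul_eq_mul, ← gaussQ_sub_gaussQ hxm]
      at this
    linarith

section Integrals

variable {α : Type*} [MeasurableSpace α] {μ : Measure α} {f g : α → ℝ}

lemma MeasureTheory.Integrable.mul_gaussQ_comp (hf : Integrable f μ) (hg : AEMeasurable g μ) :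
    Integrable (fun x ↦ f x * gaussQ (g x)) μ :=
  hf.mul_bdd (gaussQ_antitone.measurable.comp_aemeasurable hg).aestronglyMeasurable (c := 1)
    (.of_forall fun x ↦ by rw [norm_of_nonneg (gaussQ_nonneg _)]; exact gaussQ_le_one _)

lemma memLp_two_sqrt (hf0 : 0 ≤ f) (hf : Integrable f μ) : MemLp (fun x ↦ √(f x)) 2 μ := by
  rw [memLp_two_iff_integrable_sq (continuous_sqrt.comp_aestronglyMeasurable
    hf.aestronglyMeasurable)]
  exact hf.congr (.of_forall fun x ↦ (sq_sqrt (hf0 x)).symm)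

lemma integrable_sqrt_mul (hf0 : 0 ≤ f) (hg0 : 0 ≤ g) (hf : Integrable f μ)
    (hg : Integrable g μ) : Integrable (fun x ↦ √(f x * g x)) μ := by
  simp only [sqrt_mul (hf0 _)]
  exact (memLp_two_sqrt hf0 hf).integrable_mul (memLp_two_sqrt hg0 hg)

lemma integral_sqrt_mul_le (hf0 : 0 ≤ f) (hg0 : 0 ≤ g) (hf : Integrable f μ)
    (hg : Integrable g μ) :
    ∫ x, √(f x * g x) ∂μ ≤ √((∫ x, f x ∂μ) * ∫ x, g x ∂μ) := by
  have hsq {h : α → ℝ} (h0 : 0 ≤ h) : ∫ x, √(h x) ^ (2 : ℝ) ∂μ = ∫ x, h x ∂μ := by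
    simp only [rpow_two, sq_sqrt (h0 _)]
  have := integral_mul_le_Lp_mul_Lq_of_nonneg HolderConjugate.two_two
    (.of_forall fun x ↦ sqrt_nonneg (f x)) (.of_forall fun x ↦ sqrt_nonneg (g x))
    (by simpa using memLp_two_sqrt hf0 hf) (by simpa using memLp_two_sqrt hg0 hg)
  simpa only [← sqrt_mul (hf0 _), hsq hf0, hsq hg0, ← sqrt_eq_rpow,
    ← sqrt_mul (integral_nonneg hf0)] using this

end Integrals

lemma mul_sqrt_div_two_mul {φ s : ℝ} (hφ : 0 < φ) : φ * √(s / (2 * φ)) = √(φ * (s / 2)) := by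
  calc φ * √(s / (2 * φ)) = √(φ ^ 2 * (s / (2 * φ))) := by
        rw [sqrt_mul (sq_nonneg φ), sqrt_sq hφ.le]
    _ = √(φ * (s / 2)) := by
        congr 1
        field_simp

lemma tangent_mul_le_mul_gaussQ_sqrt_div {m φ s : ℝ} (hm : 0 ≤ m) (hφ : 0 < φ) :
    (gaussQ m + gaussianPDFReal 0 1 m * m) * φ - gaussianPDFReal 0 1 m * √(φ * (s / 2))
      ≤ φ * gaussQ √(s / (2 * φ)) := by
  calc (gaussQ m + gaussianPDFReal 0 1 m * m) * φ - gaussianPDFReal 0 1 m * √(φ * (s / 2))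
      = φ * (gaussQ m - gaussianPDFReal 0 1 m * (√(s / (2 * φ)) - m)) := by
        rw [← mul_sqrt_div_two_mul hφ]; ring
    _ ≤ φ * gaussQ √(s / (2 * φ)) :=
        mul_le_mul_of_nonneg_left (gaussQ_sub_mul_le_gaussQ hm (sqrt_nonneg _)) hφ.le

theorem jensen_schwarz_step_general
    {Ω : Type*} [MeasurableSpace Ω] (P : Measure Ω) [IsProbabilityMeasure P]
    (Φ : Ω → ℝ) (hΦint : Integrable Φ P)
    (hΦ : ∀ ω, Φ ω ∈ Set.Ioc (0 : ℝ) (1 / 2))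
    (S' : Ω → ℝ) (hS'int : Integrable S' P)
    (hS' : ∀ ω, 0 ≤ S' ω) :
    ∫ ω, Φ ω * gaussQ (Real.sqrt (S' ω / (2 * Φ ω))) ∂P
      ≥ (∫ ω, Φ ω ∂P) * gaussQ (Real.sqrt ((∫ ω, S' ω ∂P) / (2 * ∫ ω, Φ ω ∂P))) := by
  set A := ∫ ω, Φ ω ∂P
  set m := √((∫ ω, S' ω ∂P) / (2 * A))
  set c := gaussianPDFReal 0 1 m
  have hΦ0 : 0 ≤ Φ := fun ω ↦ (hΦ ω).1.le
  have hS'0 : 0 ≤ fun ω ↦ S' ω / 2 := fun ω ↦ div_nonneg (hS' ω) zero_le_two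
  have hA : 0 < A := by
    simp [A, integral_pos_iff_support_of_nonneg hΦ0 hΦint, Function.support, (hΦ _).1.ne']
  have hS'half : Integrable (fun ω ↦ S' ω / 2) P := hS'int.div_const 2
  have hroot : Integrable (fun ω ↦ √(Φ ω * (S' ω / 2))) P :=
    integrable_sqrt_mul hΦ0 hS'0 hΦint hS'half
  have hCS : ∫ ω, √(Φ ω * (S' ω / 2)) ∂P ≤ m * A := by
    calc ∫ ω, √(Φ ω * (S' ω / 2)) ∂P ≤ √(A * ∫ ω, S' ω / 2 ∂P) :=
          integral_sqrt_mul_le hΦ0 hS'0 hΦint hS'half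
      _ = m * A := by
          rw [integral_div, ← mul_sqrt_div_two_mul hA, mul_comm]
  have hLHS : Integrable (fun ω ↦ Φ ω * gaussQ √(S' ω / (2 * Φ ω))) P :=
    hΦint.mul_gaussQ_comp (hS'int.aemeasurable.div (hΦint.aemeasurable.const_mul 2)).sqrt
  calc A * gaussQ m ≤ (gaussQ m + c * m) * A - c * ∫ ω, √(Φ ω * (S' ω / 2)) ∂P := by
        nlinarith [gaussianPDFReal_nonneg 0 1 m]
    _ = ∫ ω, ((gaussQ m + c * m) * Φ ω - c * √(Φ ω * (S' ω / 2))) ∂P := by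
        rw [integral_sub (hΦint.const_mul _) (hroot.const_mul _), integral_const_mul,
          integral_const_mul]
    _ ≤ ∫ ω, Φ ω * gaussQ √(S' ω / (2 * Φ ω)) ∂P :=
        integral_mono ((hΦint.const_mul _).sub (hroot.const_mul _)) hLHS
          fun ω ↦ tangent_mul_le_mul_gaussQ_sqrt_div (sqrt_nonneg _) (hΦ ω).1

/-- **Jensen-plus-Cauchy–Schwarz step (eqs. (19)–(21)).**
On a probability space, for measurable integrable `Φ : Ω → (0, 1/2]` and measurable
integrable `S̃ : Ω → [0, ∞)`,
`E[Φ·Q(√(S̃/(2Φ)))] ≥ E[Φ]·Q(√(E[S̃]/(2E[Φ])))`. -/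
theorem jensen_schwarz_step
    {Ω : Type*} [MeasurableSpace Ω] (P : Measure Ω) [IsProbabilityMeasure P]
    (Φ : Ω → ℝ) (hΦmeas : Measurable Φ) (hΦint : Integrable Φ P)
    (hΦ : ∀ ω, Φ ω ∈ Set.Ioc (0 : ℝ) (1 / 2))
    (S' : Ω → ℝ) (hS'meas : Measurable S') (hS'int : Integrable S' P)
    (hS' : ∀ ω, 0 ≤ S' ω) :
    ∫ ω, Φ ω * gaussQ (Real.sqrt (S' ω / (2 * Φ ω))) ∂P
      ≥ (∫ ω, Φ ω ∂P) * gaussQ (Real.sqrt ((∫ ω, S' ω ∂P) / (2 * ∫ ω, Φ ω ∂P))) :=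
  jensen_schwarz_step_general P Φ hΦint hΦ S' hS'int hS'
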